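/- arXiv:1504.01086 — 3 statements merged into one kernel-verified Lean document; each statement's English description precedes it below -/
import Mathlib

section
/- In the virtual singular braid monoid VSB_n, for every 1 ≤ i ≤ n−2 one has the detour formulas σ_{i+1} = (v_i v_{i−1} ⋯ v₂ v₁)(v_{i+1} v_i ⋯ v₃ v₂) σ_1 (v₂ v₃ ⋯ v_i v_{i+1})(v₁ v₂ ⋯ v_{i−1} v_i) and σ_{i+1}⁻¹ = (v_i v_{i−1} ⋯ v₂ v₁)(v_{i+1} v_i ⋯ v₃ v₂) σ_1⁻¹ (v₂ v₃ ⋯ v_i v_{i+1})(v₁ v₂ ⋯ v_{i−1} v_i). -/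
namespace VSBpaper

/-- `ascV v a b = v a * v (a+1) * ⋯ * v b` (equal to `1` when `b < a`). -/
def ascV {M : Type*} [Monoid M] (v : ℕ → M) (a b : ℕ) : M :=
  ((List.range' a (b + 1 - a)).map v).prod

/-- `descV v a b = v b * v (b-1) * ⋯ * v a` (equal to `1` when `b < a`). -/
def descV {M : Type*} [Monoid M] (v : ℕ → M) (a b : ℕ) : M :=
  (((List.range' a (b + 1 - a)).map v).reverse).prod

/-- Generators of the virtual singular braid monoid on `n` strands:
`sig a` is `σ_{a+1}`, `sigInv a` is `σ_{a+1}⁻¹`, `tau a` is `τ_{a+1}`, `vir a` is `v_{a+1}`,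
so that generator indices automatically lie in `{1, …, n-1}`. -/
inductive VSBgen (n : ℕ) : Type
  | sig : Fin (n - 1) → VSBgen n
  | sigInv : Fin (n - 1) → VSBgen n
  | tau : Fin (n - 1) → VSBgen n
  | vir : Fin (n - 1) → VSBgen n

open FreeMonoid VSBgen in
/-- The defining relations of the virtual singular braid monoid `VSB n`. -/
inductive VSBrel (n : ℕ) : FreeMonoid (VSBgen n) → FreeMonoid (VSBgen n) → Prop
  /- σᵢ σᵢ⁻¹ = 1 -/
  | mul_inv (a : Fin (n - 1)) :
      VSBrel n (of (sig a) * of (sigInv a)) 1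
  /- σᵢ⁻¹ σᵢ = 1 -/
  | inv_mul (a : Fin (n - 1)) :
      VSBrel n (of (sigInv a) * of (sig a)) 1
  /- vᵢ² = 1 -/
  | v_sq (a : Fin (n - 1)) :
      VSBrel n (of (vir a) * of (vir a)) 1
  /- σᵢσⱼσᵢ = σⱼσᵢσⱼ for |i-j| = 1 -/
  | braid_sig (a b : Fin (n - 1)) (h : (a : ℕ) + 1 = b ∨ (b : ℕ) + 1 = a) :
      VSBrel n (of (sig a) * of (sig b) * of (sig a))
               (of (sig b) * of (sig a) * of (sig b))
  /- vᵢvⱼvᵢ = vⱼvᵢvⱼ for |i-j| = 1 -/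
  | braid_vir (a b : Fin (n - 1)) (h : (a : ℕ) + 1 = b ∨ (b : ℕ) + 1 = a) :
      VSBrel n (of (vir a) * of (vir b) * of (vir a))
               (of (vir b) * of (vir a) * of (vir b))
  /- vᵢσⱼvᵢ = vⱼσᵢvⱼ for |i-j| = 1 -/
  | vir_sig_vir (a b : Fin (n - 1)) (h : (a : ℕ) + 1 = b ∨ (b : ℕ) + 1 = a) :
      VSBrel n (of (vir a) * of (sig b) * of (vir a))
               (of (vir b) * of (sig a) * of (vir b))
  /- vᵢτⱼvᵢ = vⱼτᵢvⱼ for |i-j| = 1 -/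
  | vir_tau_vir (a b : Fin (n - 1)) (h : (a : ℕ) + 1 = b ∨ (b : ℕ) + 1 = a) :
      VSBrel n (of (vir a) * of (tau b) * of (vir a))
               (of (vir b) * of (tau a) * of (vir b))
  /- σᵢσⱼτᵢ = τⱼσᵢσⱼ for |i-j| = 1 -/
  | sig_sig_tau (a b : Fin (n - 1)) (h : (a : ℕ) + 1 = b ∨ (b : ℕ) + 1 = a) :
      VSBrel n (of (sig a) * of (sig b) * of (tau a))
               (of (tau b) * of (sig a) * of (sig b))
  /- σᵢτᵢ = τᵢσᵢ -/
  | sig_tau (a : Fin (n - 1)) :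
      VSBrel n (of (sig a) * of (tau a)) (of (tau a) * of (sig a))
  /- gᵢ hⱼ = hⱼ gᵢ for g, h ∈ {σ, σ⁻¹, τ, v} and |i-j| > 1 -/
  | far_comm (g h : Fin (n - 1) → VSBgen n)
      (hg : g = sig ∨ g = sigInv ∨ g = tau ∨ g = vir)
      (hh : h = sig ∨ h = sigInv ∨ h = tau ∨ h = vir)
      (a b : Fin (n - 1)) (hab : (a : ℕ) + 1 < b ∨ (b : ℕ) + 1 < a) :
      VSBrel n (of (g a) * of (h b)) (of (h b) * of (g a))

/-- The virtual singular braid monoid on `n` strands, presented by generators and relations. -/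
abbrev VSB (n : ℕ) := PresentedMonoid (VSBrel n)

/-- The real crossing `σ_k ∈ VSB n` (junk value `1` if `k ∉ {1, …, n-1}`). -/
def VSB.sigE (n : ℕ) (k : ℕ) : VSB n :=
  if h : 1 ≤ k ∧ k ≤ n - 1 then PresentedMonoid.of (VSBrel n) (VSBgen.sig ⟨k - 1, by omega⟩)
  else 1

/-- The inverse real crossing `σ_k⁻¹ ∈ VSB n` (junk value `1` if `k ∉ {1, …, n-1}`). -/
def VSB.sigInvE (n : ℕ) (k : ℕ) : VSB n :=
  if h : 1 ≤ k ∧ k ≤ n - 1 then PresentedMonoid.of (VSBrel n) (VSBgen.sigInv ⟨k - 1, by omega⟩)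
  else 1

/-- The singular crossing `τ_k ∈ VSB n` (junk value `1` if `k ∉ {1, …, n-1}`). -/
def VSB.tauE (n : ℕ) (k : ℕ) : VSB n :=
  if h : 1 ≤ k ∧ k ≤ n - 1 then PresentedMonoid.of (VSBrel n) (VSBgen.tau ⟨k - 1, by omega⟩)
  else 1

/-- The virtual crossing `v_k ∈ VSB n` (junk value `1` if `k ∉ {1, …, n-1}`). -/
def VSB.virE (n : ℕ) (k : ℕ) : VSB n :=
  if h : 1 ≤ k ∧ k ≤ n - 1 then PresentedMonoid.of (VSBrel n) (VSBgen.vir ⟨k - 1, by omega⟩)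
  else 1

/-!
Since `v_j² = 1`, the mixed relation `v_j σ_{j+1} v_j = v_{j+1} σ_j v_{j+1}` says that
`σ_{j+1} = (v_j v_{j+1}) σ_j (v_{j+1} v_j)`. Unwinding this down to `σ_1`, the far commutation of
`v_{j+1}` with `v_1, …, v_{j-1}` regroups the accumulated conjugators into the two descending and
the two ascending words. The inverse crossings obey the same mixed relation, because both of its
sides are then two-sided inverses of the two (equal) sides of the relation for `σ`.
-/

section Detour

variable {M : Type*} [Monoid M]

theorem ascV_succ (v : ℕ → M) {a b : ℕ} (h : a ≤ b + 1) :
    ascV v a (b + 1) = ascV v a b * v (b + 1) := by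
  rw [ascV, ascV, show b + 1 + 1 - a = b + 1 - a + 1 by omega, List.range'_concat,
    show a + 1 * (b + 1 - a) = b + 1 by omega, List.map_append, List.prod_append]
  simp

theorem descV_succ (v : ℕ → M) {a b : ℕ} (h : a ≤ b + 1) :
    descV v a (b + 1) = v (b + 1) * descV v a b := by
  rw [descV, descV, show b + 1 + 1 - a = b + 1 - a + 1 by omega, List.range'_concat,
    show a + 1 * (b + 1 - a) = b + 1 by omega, List.map_append, List.reverse_append]
  simp

theorem commute_ascV {c : M} {v : ℕ → M} {a b : ℕ}
    (h : ∀ j, a ≤ j → j ≤ b → Commute c (v j)) : Commute c (ascV v a b) :=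
  Commute.list_prod_right _ _ fun x hx => by
    obtain ⟨j, hj, rfl⟩ := List.mem_map.1 hx
    obtain ⟨hj1, hj2⟩ := List.mem_range'_1.1 hj
    exact h j hj1 (by omega)

theorem commute_descV {c : M} {v : ℕ → M} {a b : ℕ}
    (h : ∀ j, a ≤ j → j ≤ b → Commute c (v j)) : Commute c (descV v a b) :=
  Commute.list_prod_right _ _ fun x hx => by
    obtain ⟨j, hj, rfl⟩ := List.mem_map.1 (List.mem_reverse.1 hx)
    obtain ⟨hj1, hj2⟩ := List.mem_range'_1.1 hj
    exact h j hj1 (by omega)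

theorem eq_conj_of_conj_eq {v w s t : M} (hv : v * v = 1) (h : v * s * v = w * t * w) :
    s = v * w * t * w * v := by
  calc s = v * v * s * (v * v) := by rw [hv, one_mul, mul_one]
    _ = v * (v * s * v) * v := by simp only [mul_assoc]
    _ = v * w * t * w * v := by rw [h]; simp only [mul_assoc]

theorem conj_inv_eq_conj_inv {v w s s' t t' : M} (hv : v * v = 1) (hw : w * w = 1)
    (hs : s' * s = 1) (ht : t * t' = 1) (h : v * s * v = w * t * w) :
    v * s' * v = w * t' * w := by
  refine left_inv_eq_right_inv (a := v * s * v) ?_ ?_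
  · rw [show v * s' * v * (v * s * v) = v * (s' * (v * v) * s) * v by simp only [mul_assoc],
      hv, mul_one, hs, mul_one, hv]
  · rw [h, show w * t * w * (w * t' * w) = w * (t * (w * w) * t') * w by simp only [mul_assoc],
      hw, mul_one, ht, mul_one, hw]

theorem eq_detour (v s : ℕ → M) (hv : ∀ j, v j * v j = 1)
    (hcomm : ∀ j l, l + 1 < j → Commute (v j) (v l)) (i : ℕ)
    (hconj : ∀ j, 1 ≤ j → j ≤ i → v j * s (j + 1) * v j = v (j + 1) * s j * v (j + 1)) :
    s (i + 1) = descV v 1 i * descV v 2 (i + 1) * s 1 * ascV v 2 (i + 1) * ascV v 1 i := by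
  induction i with
  | zero => simp [descV, ascV]
  | succ k ih =>
    have hD : Commute (v (k + 2)) (descV v 1 k) := commute_descV fun l _ hl => hcomm _ _ (by omega)
    have hA : Commute (v (k + 2)) (ascV v 1 k) := commute_ascV fun l _ hl => hcomm _ _ (by omega)
    rw [eq_conj_of_conj_eq (hv (k + 1)) (hconj (k + 1) (by omega) le_rfl),
      ih fun j hj1 hj2 => hconj j hj1 (by omega), descV_succ v (by omega : 1 ≤ k + 1),
      descV_succ v (by omega : 2 ≤ k + 1 + 1), ascV_succ v (by omega : 2 ≤ k + 1 + 1),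
      ascV_succ v (by omega : 1 ≤ k + 1)]
    simp only [mul_assoc]
    rw [hD.left_comm, ← hA.left_comm]

end Detour

namespace VSB

open PresentedMonoid

theorem virE_succ (n j : ℕ) (h : j < n - 1) :
    virE n (j + 1) = mk (VSBrel n) (FreeMonoid.of (VSBgen.vir ⟨j, h⟩)) :=
  dif_pos ⟨by omega, by omega⟩

theorem sigE_succ (n j : ℕ) (h : j < n - 1) :
    sigE n (j + 1) = mk (VSBrel n) (FreeMonoid.of (VSBgen.sig ⟨j, h⟩)) :=
  dif_pos ⟨by omega, by omega⟩

theorem sigInvE_succ (n j : ℕ) (h : j < n - 1) :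
    sigInvE n (j + 1) = mk (VSBrel n) (FreeMonoid.of (VSBgen.sigInv ⟨j, h⟩)) :=
  dif_pos ⟨by omega, by omega⟩

-- Out of range `virE n k = 1`, so this and `commute_virE` hold for all indices.
theorem virE_mul_self (n k : ℕ) : virE n k * virE n k = 1 := by
  unfold virE
  split_ifs
  · simpa only [of, map_mul, map_one] using mk_eq_mk_of_rel (VSBrel.v_sq _)
  · exact one_mul 1

theorem sigE_mul_sigInvE (n k : ℕ) : sigE n k * sigInvE n k = 1 := by
  unfold sigE sigInvE
  split_ifs
  · simpa only [of, map_mul, map_one] using mk_eq_mk_of_rel (VSBrel.mul_inv _)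
  · exact one_mul 1

theorem sigInvE_mul_sigE (n k : ℕ) : sigInvE n k * sigE n k = 1 := by
  unfold sigE sigInvE
  split_ifs
  · simpa only [of, map_mul, map_one] using mk_eq_mk_of_rel (VSBrel.inv_mul _)
  · exact one_mul 1

theorem commute_virE (n j l : ℕ) (h : l + 1 < j) : Commute (virE n j) (virE n l) := by
  unfold virE
  split_ifs with hj hl
  · have h := mk_eq_mk_of_rel (VSBrel.far_comm (n := n) VSBgen.vir VSBgen.vir
      (.inr (.inr (.inr rfl))) (.inr (.inr (.inr rfl))) ⟨j - 1, by omega⟩ ⟨l - 1, by omega⟩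
      (.inr (show l - 1 + 1 < j - 1 by omega)))
    rw [map_mul, map_mul] at h
    exact h
  all_goals simp

theorem virE_mul_sigE_mul_virE (n j : ℕ) (h1 : 1 ≤ j) (h2 : j + 1 ≤ n - 1) :
    virE n j * sigE n (j + 1) * virE n j = virE n (j + 1) * sigE n j * virE n (j + 1) := by
  obtain ⟨j, rfl⟩ : ∃ j', j = j' + 1 := ⟨j - 1, by omega⟩
  rw [virE_succ n j (by omega), virE_succ n (j + 1) h2, sigE_succ n j (by omega),
    sigE_succ n (j + 1) h2]
  simpa only [map_mul] using mk_eq_mk_of_rel (VSBrel.vir_sig_vir ⟨j, _⟩ ⟨j + 1, h2⟩ (.inl rfl))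

theorem virE_mul_sigInvE_mul_virE (n j : ℕ) (h1 : 1 ≤ j) (h2 : j + 1 ≤ n - 1) :
    virE n j * sigInvE n (j + 1) * virE n j =
      virE n (j + 1) * sigInvE n j * virE n (j + 1) :=
  conj_inv_eq_conj_inv (virE_mul_self n j) (virE_mul_self n (j + 1)) (sigInvE_mul_sigE _ _)
    (sigE_mul_sigInvE _ _) (virE_mul_sigE_mul_virE n j h1 h2)

end VSB

theorem VSB_detour_sig_general (n : ℕ) :
    ∀ i : ℕ, 1 ≤ i → i ≤ n - 2 →
      VSB.sigE n (i + 1) =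
        descV (VSB.virE n) 1 i * descV (VSB.virE n) 2 (i + 1) * VSB.sigE n 1 *
          ascV (VSB.virE n) 2 (i + 1) * ascV (VSB.virE n) 1 i ∧
      VSB.sigInvE n (i + 1) =
        descV (VSB.virE n) 1 i * descV (VSB.virE n) 2 (i + 1) * VSB.sigInvE n 1 *
          ascV (VSB.virE n) 2 (i + 1) * ascV (VSB.virE n) 1 i := by
  intro i _ hi
  exact ⟨eq_detour _ _ (VSB.virE_mul_self n) (VSB.commute_virE n) i
      fun j hj1 hj2 => VSB.virE_mul_sigE_mul_virE n j hj1 (by omega),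
    eq_detour _ _ (VSB.virE_mul_self n) (VSB.commute_virE n) i
      fun j hj1 hj2 => VSB.virE_mul_sigInvE_mul_virE n j hj1 (by omega)⟩

/-- **Detour formulas for the real crossings in `VSB n`.**
For every `1 ≤ i ≤ n-2`,
`σ_{i+1} = (v_i ⋯ v₂v₁)(v_{i+1} ⋯ v₃v₂) σ₁ (v₂v₃ ⋯ v_{i+1})(v₁v₂ ⋯ v_i)` and
`σ_{i+1}⁻¹ = (v_i ⋯ v₂v₁)(v_{i+1} ⋯ v₃v₂) σ₁⁻¹ (v₂v₃ ⋯ v_{i+1})(v₁v₂ ⋯ v_i)`. -/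
theorem VSB_detour_sig (n : ℕ) (hn : 2 ≤ n) :
    ∀ i : ℕ, 1 ≤ i → i ≤ n - 2 →
      VSB.sigE n (i + 1) =
        descV (VSB.virE n) 1 i * descV (VSB.virE n) 2 (i + 1) * VSB.sigE n 1 *
          ascV (VSB.virE n) 2 (i + 1) * ascV (VSB.virE n) 1 i ∧
      VSB.sigInvE n (i + 1) =
        descV (VSB.virE n) 1 i * descV (VSB.virE n) 2 (i + 1) * VSB.sigInvE n 1 *
          ascV (VSB.virE n) 2 (i + 1) * ascV (VSB.virE n) 1 i :=
  VSB_detour_sig_general n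

end VSBpaper
end

section
/- The virtual singular braid monoid VSB_n is generated, as a monoid, by the set {σ_1, σ_1⁻¹, τ_1, v_1, …, v_{n−1}}; that is, the smallest submonoid of VSB_n containing σ_1, σ_1⁻¹, τ_1 and all v_i (1 ≤ i ≤ n−1) is all of VSB_n. -/
/-!
Conjugation by `v_i v_{i+1}` shifts indices up by one: from `v_i² = 1` and the mixed relations
`v_i x_{i+1} v_i = v_{i+1} x_i v_{i+1}` (for `x = σ, τ`) we get
`x_{i+1} = (v_i v_{i+1}) x_i (v_{i+1} v_i)`, and `σ_{i+1}⁻¹` is the same conjugate of `σ_i⁻¹`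
because inverses in a monoid are unique. Induction on `i` then puts every `σ_i`, `σ_i⁻¹`, `τ_i`
in the submonoid generated by `σ_1`, `σ_1⁻¹`, `τ_1` and the virtual crossings.
-/

namespace VSBpaper

section Monoid

variable {M : Type*} [Monoid M]

theorem eq_mul_mul_of_mul_self_eq_one {u x z : M} (hu : u * u = 1) (h : u * x * u = z) :
    x = u * z * u := by
  calc x = u * u * x * (u * u) := by rw [hu, one_mul, mul_one]
    _ = u * z * u := by rw [← h]; simp only [mul_assoc]

theorem mul_mul_mul_eq_one_of_mul_self_eq_one {u w : M} (hu : u * u = 1) (hw : w * w = 1) :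
    u * w * (w * u) = 1 := by
  rw [mul_assoc, ← mul_assoc w, hw, one_mul, hu]

theorem conj_mul_conj_eq_one {c c' x y : M} (hc : c' * c = 1) (hcc : c * c' = 1)
    (hxy : x * y = 1) : c * x * c' * (c * y * c') = 1 := by
  calc c * x * c' * (c * y * c') = c * x * (c' * c) * y * c' := by simp only [mul_assoc]
    _ = 1 := by rw [hc, mul_one, mul_assoc c, hxy, mul_one, hcc]

end Monoid

namespace VSB

open VSBgen PresentedMonoid

variable {n : ℕ}

theorem vir_mul_vir (a : Fin (n - 1)) : of (VSBrel n) (vir a) * of (VSBrel n) (vir a) = 1 :=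
  mk_eq_mk_of_rel (VSBrel.v_sq a)

theorem sig_mul_sigInv (a : Fin (n - 1)) :
    of (VSBrel n) (sig a) * of (VSBrel n) (sigInv a) = 1 :=
  mk_eq_mk_of_rel (VSBrel.mul_inv a)

theorem sigInv_mul_sig (a : Fin (n - 1)) :
    of (VSBrel n) (sigInv a) * of (VSBrel n) (sig a) = 1 :=
  mk_eq_mk_of_rel (VSBrel.inv_mul a)

theorem vir_sig_vir {a b : Fin (n - 1)} (hab : (a : ℕ) + 1 = b) :
    of (VSBrel n) (vir a) * of (VSBrel n) (sig b) * of (VSBrel n) (vir a) =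
      of (VSBrel n) (vir b) * of (VSBrel n) (sig a) * of (VSBrel n) (vir b) :=
  mk_eq_mk_of_rel (VSBrel.vir_sig_vir a b (.inl hab))

theorem vir_tau_vir {a b : Fin (n - 1)} (hab : (a : ℕ) + 1 = b) :
    of (VSBrel n) (vir a) * of (VSBrel n) (tau b) * of (VSBrel n) (vir a) =
      of (VSBrel n) (vir b) * of (VSBrel n) (tau a) * of (VSBrel n) (vir b) :=
  mk_eq_mk_of_rel (VSBrel.vir_tau_vir a b (.inl hab))

theorem sig_eq_conj {a b : Fin (n - 1)} (hab : (a : ℕ) + 1 = b) :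
    of (VSBrel n) (sig b) = of (VSBrel n) (vir a) * of (VSBrel n) (vir b) *
      of (VSBrel n) (sig a) * (of (VSBrel n) (vir b) * of (VSBrel n) (vir a)) :=
  (eq_mul_mul_of_mul_self_eq_one (vir_mul_vir a) (vir_sig_vir hab)).trans
    (by simp only [mul_assoc])

theorem tau_eq_conj {a b : Fin (n - 1)} (hab : (a : ℕ) + 1 = b) :
    of (VSBrel n) (tau b) = of (VSBrel n) (vir a) * of (VSBrel n) (vir b) *
      of (VSBrel n) (tau a) * (of (VSBrel n) (vir b) * of (VSBrel n) (vir a)) :=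
  (eq_mul_mul_of_mul_self_eq_one (vir_mul_vir a) (vir_tau_vir hab)).trans
    (by simp only [mul_assoc])

theorem sigInv_eq_conj {a b : Fin (n - 1)} (hab : (a : ℕ) + 1 = b) :
    of (VSBrel n) (sigInv b) = of (VSBrel n) (vir a) * of (VSBrel n) (vir b) *
      of (VSBrel n) (sigInv a) * (of (VSBrel n) (vir b) * of (VSBrel n) (vir a)) := by
  refine left_inv_eq_right_inv (sigInv_mul_sig b) ?_
  rw [sig_eq_conj hab]
  exact conj_mul_conj_eq_one
    (mul_mul_mul_eq_one_of_mul_self_eq_one (vir_mul_vir b) (vir_mul_vir a))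
    (mul_mul_mul_eq_one_of_mul_self_eq_one (vir_mul_vir a) (vir_mul_vir b)) (sig_mul_sigInv a)

variable (S : Submonoid (VSB n))

theorem crossings_mem_succ (hvir : ∀ a, of (VSBrel n) (vir a) ∈ S) {a b : Fin (n - 1)}
    (hab : (a : ℕ) + 1 = b)
    (h : of (VSBrel n) (sig a) ∈ S ∧ of (VSBrel n) (sigInv a) ∈ S ∧ of (VSBrel n) (tau a) ∈ S) :
    of (VSBrel n) (sig b) ∈ S ∧ of (VSBrel n) (sigInv b) ∈ S ∧ of (VSBrel n) (tau b) ∈ S := by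
  have conj_mem {x : VSB n} (hx : x ∈ S) : of (VSBrel n) (vir a) * of (VSBrel n) (vir b) * x *
      (of (VSBrel n) (vir b) * of (VSBrel n) (vir a)) ∈ S :=
    S.mul_mem (S.mul_mem (S.mul_mem (hvir a) (hvir b)) hx) (S.mul_mem (hvir b) (hvir a))
  obtain ⟨hsig, hsigInv, htau⟩ := h
  exact ⟨sig_eq_conj hab ▸ conj_mem hsig, sigInv_eq_conj hab ▸ conj_mem hsigInv,
    tau_eq_conj hab ▸ conj_mem htau⟩

theorem eq_top_of_vir_mem_of_crossings_zero_mem (hvir : ∀ a, of (VSBrel n) (vir a) ∈ S)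
    (hzero : ∀ a : Fin (n - 1), (a : ℕ) = 0 →
      of (VSBrel n) (sig a) ∈ S ∧ of (VSBrel n) (sigInv a) ∈ S ∧ of (VSBrel n) (tau a) ∈ S) :
    S = ⊤ := by
  have hcross (k : ℕ) (hk : k < n - 1) : of (VSBrel n) (sig ⟨k, hk⟩) ∈ S ∧
      of (VSBrel n) (sigInv ⟨k, hk⟩) ∈ S ∧ of (VSBrel n) (tau ⟨k, hk⟩) ∈ S := by
    induction k with
    | zero => exact hzero _ rfl
    | succ k ih => exact crossings_mem_succ S hvir (a := ⟨k, by omega⟩) rfl (ih _)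
  rw [eq_top_iff, ← closure_range_of, Submonoid.closure_le]
  rintro _ ⟨g, rfl⟩
  cases g with
  | sig a => exact (hcross a a.isLt).1
  | sigInv a => exact (hcross a a.isLt).2.1
  | tau a => exact (hcross a a.isLt).2.2
  | vir a => exact hvir a

theorem virE_succ_s3 (a : Fin (n - 1)) : virE n (a + 1) = of (VSBrel n) (vir a) := by
  rw [virE, dif_pos (by omega)]
  rfl

theorem sigE_one {a : Fin (n - 1)} (ha : (a : ℕ) = 0) : sigE n 1 = of (VSBrel n) (sig a) := by
  rw [sigE, dif_pos (by omega)]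
  congr
  omega

theorem sigInvE_one {a : Fin (n - 1)} (ha : (a : ℕ) = 0) :
    sigInvE n 1 = of (VSBrel n) (sigInv a) := by
  rw [sigInvE, dif_pos (by omega)]
  congr
  omega

theorem tauE_one {a : Fin (n - 1)} (ha : (a : ℕ) = 0) : tauE n 1 = of (VSBrel n) (tau a) := by
  rw [tauE, dif_pos (by omega)]
  congr
  omega

end VSB

theorem VSB_reduced_generating_set_general (n : ℕ) :
    Submonoid.closure
      ({VSB.sigE n 1, VSB.sigInvE n 1, VSB.tauE n 1} ∪
        {x : VSB n | ∃ i : ℕ, 1 ≤ i ∧ i ≤ n - 1 ∧ x = VSB.virE n i}) = ⊤ := by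
  refine VSB.eq_top_of_vir_mem_of_crossings_zero_mem _ (fun a => ?_) (fun a ha => ?_)
  · exact Submonoid.subset_closure (.inr ⟨a + 1, by omega, by omega, (VSB.virE_succ_s3 a).symm⟩)
  · rw [← VSB.sigE_one ha, ← VSB.sigInvE_one ha, ← VSB.tauE_one ha]
    exact ⟨Submonoid.subset_closure (by simp), Submonoid.subset_closure (by simp),
      Submonoid.subset_closure (by simp)⟩

/-- **`VSB n` is generated by `σ₁, σ₁⁻¹, τ₁` and the virtual crossings.**
The smallest submonoid of `VSB n` containing `σ₁`, `σ₁⁻¹`, `τ₁` and all `v_i`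
for `1 ≤ i ≤ n-1` is the whole monoid. -/
theorem VSB_reduced_generating_set (n : ℕ) (hn : 2 ≤ n) :
    Submonoid.closure
      ({VSB.sigE n 1, VSB.sigInvE n 1, VSB.tauE n 1} ∪
        {x : VSB n | ∃ i : ℕ, 1 ≤ i ∧ i ≤ n - 1 ∧ x = VSB.virE n i}) = ⊤ :=
  VSB_reduced_generating_set_general n

end VSBpaper
end

section
/- Under the stated hypotheses, for every index 1 ≤ i ≤ n−1, the relation τ_i σ_i = σ_i τ_i holds in M. -/
/-!
Each `σ_{i+1}`, `τ_{i+1}` is obtained from `σ`, `τ` by the same map `x ↦ g x g'` with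
`g' g = 1`, since the `v_j` are involutions. Such a map is multiplicative, so it carries the
relation `τ σ = σ τ` to `τ_i σ_i = σ_i τ_i`.
-/

namespace VSBpaper

theorem _root_.List.prod_mul_prod_reverse_eq_one {M : Type*} [Monoid M] (l : List M)
    (h : ∀ x ∈ l, x * x = 1) : l.prod * l.reverse.prod = 1 := by
  induction l with
  | nil => simp
  | cons x t ih =>
    have ht : t.prod * t.reverse.prod = 1 := ih fun y hy => h y (List.mem_cons_of_mem x hy)
    calc (x :: t).prod * (x :: t).reverse.prod = x * (t.prod * t.reverse.prod) * x := by
          simp only [List.prod_cons, List.reverse_cons, List.prod_append,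
            List.prod_nil, mul_one, mul_assoc]
      _ = 1 := by rw [ht, mul_one, h x List.mem_cons_self]

theorem ascV_mul_descV {M : Type*} [Monoid M] {v : ℕ → M} {a b : ℕ}
    (h : ∀ j, a ≤ j → j ≤ b → v j * v j = 1) : ascV v a b * descV v a b = 1 := by
  refine List.prod_mul_prod_reverse_eq_one _ fun x hx => ?_
  obtain ⟨j, hj, rfl⟩ := List.mem_map.mp hx
  rw [List.mem_range'_1] at hj
  exact h j hj.1 (by omega)

@[simps]
def conjMulHom {M : Type*} [Monoid M] {g g' : M} (hg : g' * g = 1) : M →ₙ* M where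
  toFun x := g * x * g'
  map_mul' x y := by
    rw [show g * x * g' * (g * y * g') = g * x * (g' * g) * y * g' by simp only [mul_assoc], hg,
      mul_one, mul_assoc g x y]

theorem tau_sigma_commute_general {M : Type*} [Monoid M] (n : ℕ) (v : ℕ → M)
    (hvsq : ∀ i : ℕ, 1 ≤ i → i ≤ n - 1 → v i * v i = 1)
    (σ τ : M)
    (hcomm_στ : σ * τ = τ * σ)
    (σs τs : ℕ → M)
    (hσ1 : σs 1 = σ) (hτ1 : τs 1 = τ)
    (hσdef : ∀ i : ℕ, 1 ≤ i → i ≤ n - 2 →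
      σs (i + 1) = descV v 1 i * descV v 2 (i + 1) * σ * ascV v 2 (i + 1) * ascV v 1 i)
    (hτdef : ∀ i : ℕ, 1 ≤ i → i ≤ n - 2 →
      τs (i + 1) = descV v 1 i * descV v 2 (i + 1) * τ * ascV v 2 (i + 1) * ascV v 1 i) :
    ∀ i : ℕ, 1 ≤ i → i ≤ n - 1 → τs i * σs i = σs i * τs i := by
  intro i hi1 hi2
  rcases i with _ | _ | k
  · omega
  · rw [hσ1, hτ1]
    exact hcomm_στ.symm
  · have hk : k + 1 ≤ n - 2 := by omega
    have hg :
        ascV v 2 (k + 2) * ascV v 1 (k + 1) * (descV v 1 (k + 1) * descV v 2 (k + 2)) = 1 := by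
      rw [mul_assoc, ← mul_assoc (ascV v 1 (k + 1)),
        ascV_mul_descV fun j hj _ => hvsq j hj (by omega), one_mul,
        ascV_mul_descV fun j hj _ => hvsq j (by omega) (by omega)]
    rw [hσdef (k + 1) (by omega) hk, hτdef (k + 1) (by omega) hk]
    simpa only [conjMulHom_apply, mul_assoc] using (Commute.map hcomm_στ.symm (conjMulHom hg)).eq

/-- **Lemma 4.7.** For every `1 ≤ i ≤ n-1`, the relation `τ_i σ_i = σ_i τ_i` holds in `M`. -/
theorem tau_sigma_commute {M : Type*} [Monoid M] (n : ℕ) (hn : 2 ≤ n) (v : ℕ → M)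
    (hvbraid : ∀ i j : ℕ, 1 ≤ i → i ≤ n - 1 → 1 ≤ j → j ≤ n - 1 → (i + 1 = j ∨ j + 1 = i) →
      v i * v j * v i = v j * v i * v j)
    (hvcomm : ∀ i j : ℕ, 1 ≤ i → i ≤ n - 1 → 1 ≤ j → j ≤ n - 1 → (i + 1 < j ∨ j + 1 < i) →
      v i * v j = v j * v i)
    (hvsq : ∀ i : ℕ, 1 ≤ i → i ≤ n - 1 → v i * v i = 1)
    (σ σ' τ : M)
    (hcomm_στ : σ * τ = τ * σ)
    (hinv : σ * σ' = 1) (hinv' : σ' * σ = 1)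
    (hτv : ∀ i : ℕ, 3 ≤ i → i ≤ n - 1 → τ * v i = v i * τ)
    (hσv : ∀ i : ℕ, 3 ≤ i → i ≤ n - 1 → σ * v i = v i * σ)
    (hbraid_base : 2 ≤ n - 1 →
      σ * (v 1 * v 2 * σ * v 2 * v 1) * σ =
        (v 1 * v 2 * σ * v 2 * v 1) * σ * (v 1 * v 2 * σ * v 2 * v 1))
    (hmixed_base : 2 ≤ n - 1 →
      τ * (v 1 * v 2 * σ * v 2 * v 1) * σ =
        (v 1 * v 2 * σ * v 2 * v 1) * σ * (v 1 * v 2 * τ * v 2 * v 1))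
    (hfar_σσ : 3 ≤ n - 1 →
      σ * (v 2 * v 3 * v 1 * v 2 * σ * v 2 * v 1 * v 3 * v 2) =
        (v 2 * v 3 * v 1 * v 2 * σ * v 2 * v 1 * v 3 * v 2) * σ)
    (hfar_τσ : 3 ≤ n - 1 →
      τ * (v 2 * v 3 * v 1 * v 2 * σ * v 2 * v 1 * v 3 * v 2) =
        (v 2 * v 3 * v 1 * v 2 * σ * v 2 * v 1 * v 3 * v 2) * τ)
    (hfar_ττ : 3 ≤ n - 1 →
      τ * (v 2 * v 3 * v 1 * v 2 * τ * v 2 * v 1 * v 3 * v 2) =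
        (v 2 * v 3 * v 1 * v 2 * τ * v 2 * v 1 * v 3 * v 2) * τ)
    (σs σs' τs : ℕ → M)
    (hσ1 : σs 1 = σ) (hσ'1 : σs' 1 = σ') (hτ1 : τs 1 = τ)
    (hσdef : ∀ i : ℕ, 1 ≤ i → i ≤ n - 2 →
      σs (i + 1) = descV v 1 i * descV v 2 (i + 1) * σ * ascV v 2 (i + 1) * ascV v 1 i)
    (hσ'def : ∀ i : ℕ, 1 ≤ i → i ≤ n - 2 →
      σs' (i + 1) = descV v 1 i * descV v 2 (i + 1) * σ' * ascV v 2 (i + 1) * ascV v 1 i)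
    (hτdef : ∀ i : ℕ, 1 ≤ i → i ≤ n - 2 →
      τs (i + 1) = descV v 1 i * descV v 2 (i + 1) * τ * ascV v 2 (i + 1) * ascV v 1 i) :
    ∀ i : ℕ, 1 ≤ i → i ≤ n - 1 → τs i * σs i = σs i * τs i :=
  tau_sigma_commute_general n v hvsq σ τ hcomm_στ σs τs hσ1 hτ1 hσdef hτdef

end VSBpaper
end
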